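/- For any linear map a : ℝⁿ → ℝ^m, the n-vector ∧_n(Id ⊕ a)·λ, where λ = e₁∧…∧e_n, decomposes as the sum over all subsets I of {1,…,n} of σ(I) e_I ∧ (∧_{|I^c|} a · e_{I^c}), where the exterior products are taken in ∧^n(ℝⁿ ⊕ ℝ^m). -/

import Mathlib

open ExteriorAlgebra

/-- The wedge, in the exterior algebra of `V`, of the vectors `f i` for `i ∈ I`,
taken in increasing order. -/
noncomputable def wedgeOver {V : Type*} [AddCommGroup V] [Module ℝ V]
    {n : ℕ} (I : Finset (Fin n)) (f : Fin n → V) : ExteriorAlgebra ℝ V :=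
  ((I.sort (· ≤ ·)).map fun i => ExteriorAlgebra.ι ℝ (f i)).prod

/-! The graph vectors split as `(eᵢ, 0) + (0, a eᵢ)`, so multilinearity of `ιMulti` expands the
wedge of the graph into a sum over subsets `I` of mixed wedges. Moving the `I`-factors of a mixed
wedge to the front costs the sign of the shuffle permutation of `(I, Iᶜ)`, computed by
`ExteriorAlgebra.ιMulti_family_mul_of_disjoint`. The same identity for the standard basis, whose
top wedge is nonzero, shows that the given `σ I` is that sign. -/

open Set.powersetCard

section

variable {V : Type*} [AddCommGroup V] [Module ℝ V] {n : ℕ}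

theorem wedgeOver_congr {I : Finset (Fin n)} {f g : Fin n → V} (h : ∀ i ∈ I, f i = g i) :
    wedgeOver I f = wedgeOver I g := by
  rw [wedgeOver, wedgeOver, List.map_congr_left fun i hi => by rw [h i ((I.mem_sort _).1 hi)]]

theorem wedgeOver_univ (f : Fin n → V) : wedgeOver Finset.univ f = ιMulti ℝ n f := by
  rw [ιMulti_apply, wedgeOver, Fin.sort_univ, List.ofFn_eq_map]

theorem wedgeOver_eq_ιMulti_family {k : ℕ} (s : Set.powersetCard (Fin n) k) (f : Fin n → V) :
    wedgeOver s.val f = ιMulti_family ℝ k f s := by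
  rw [ιMulti_family, ιMulti_apply, wedgeOver, ofFinEmbEquiv_symm_apply]
  congr 1
  apply List.ext_getElem
  · simp
  · intro i _ _
    simp only [List.getElem_map, List.getElem_ofFn, Function.comp_apply]
    rfl

/-- The sign `σ(I)` of the permutation sorting the elements of `I` followed by those of `Iᶜ`. -/
def shuffleSign (I : Finset (Fin n)) : ℤˣ :=
  (permOfDisjoint (s := ⟨I, rfl⟩) (t := ⟨Iᶜ, rfl⟩) disjoint_compl_right).sign

theorem wedgeOver_mul_wedgeOver_compl (I : Finset (Fin n)) (f : Fin n → V) :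
    wedgeOver I f * wedgeOver Iᶜ f = shuffleSign I • wedgeOver Finset.univ f := by
  have h := ιMulti_family_mul_of_disjoint ℝ f (s := ⟨I, rfl⟩) (t := ⟨Iᶜ, rfl⟩)
    disjoint_compl_right
  rwa [← wedgeOver_eq_ιMulti_family, ← wedgeOver_eq_ιMulti_family, ← wedgeOver_eq_ιMulti_family,
    coe_disjUnion, Finset.disjUnion_eq_union, Finset.union_compl] at h

theorem wedgeOver_univ_basis_ne_zero (b : Module.Basis (Fin n) ℝ V) :
    wedgeOver Finset.univ b ≠ 0 := by
  let univ : Set.powersetCard (Fin n) n := ⟨Finset.univ, Finset.card_fin n⟩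
  have h := (exteriorPower.ιMulti_family_linearIndependent_ofBasis ℝ n b).ne_zero univ
  rw [wedgeOver_eq_ιMulti_family univ]
  exact fun h0 => h (Subtype.ext h0)

theorem eq_shuffleSign_of_wedgeOver_mul_wedgeOver_compl (b : Module.Basis (Fin n) ℝ V)
    {I : Finset (Fin n)} {c : ℝ}
    (h : wedgeOver I b * wedgeOver Iᶜ b = c • wedgeOver Finset.univ b) :
    c = ((shuffleSign I : ℤ) : ℝ) := by
  rw [wedgeOver_mul_wedgeOver_compl, Units.smul_def, ← Int.cast_smul_eq_zsmul ℝ] at h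
  exact smul_left_injective ℝ (wedgeOver_univ_basis_ne_zero b) h.symm

theorem wedgeOver_univ_piecewise (I : Finset (Fin n)) (f g : Fin n → V) :
    wedgeOver Finset.univ (I.piecewise f g) =
      shuffleSign I • (wedgeOver I f * wedgeOver Iᶜ g) := by
  rw [wedgeOver_congr fun i hi => (I.piecewise_eq_of_mem f g hi).symm,
    wedgeOver_congr fun i hi => (I.piecewise_eq_of_notMem f g (Finset.mem_compl.1 hi)).symm,
    wedgeOver_mul_wedgeOver_compl, smul_smul, Int.units_mul_self, one_smul]

theorem wedgeOver_univ_add (f g : Fin n → V) :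
    wedgeOver Finset.univ (f + g) =
      ∑ I : Finset (Fin n), shuffleSign I • (wedgeOver I f * wedgeOver Iᶜ g) := by
  simp only [wedgeOver_univ, (ιMulti ℝ n).map_add_univ, ← wedgeOver_univ_piecewise]

end

/-- for a linear map `a : ℝⁿ → ℝᵐ`, the `n`-vector `∧_n(Id ⊕ a)·λ`,
`λ = e₁∧…∧e_n`, decomposes as `∑_{I ⊆ {1,…,n}} σ(I) e_I ∧ (∧_{|I^c|} a · e_{I^c})`
in `⋀ⁿ(ℝⁿ ⊕ ℝᵐ)`, where `σ(I)` is the sign with `e_I ∧ e_{I^c} = σ(I) e₁∧…∧e_n`. -/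
theorem wedge_graph_decomposition (n m : ℕ)
    (a : (Fin n → ℝ) →ₗ[ℝ] (Fin m → ℝ))
    (σ : Finset (Fin n) → ℝ)
    (hσ : ∀ I : Finset (Fin n),
      wedgeOver I (fun i => Pi.single i (1 : ℝ)) *
        wedgeOver Iᶜ (fun i => Pi.single i (1 : ℝ))
      = σ I • wedgeOver Finset.univ (fun i => Pi.single i (1 : ℝ))) :
    wedgeOver (V := (Fin n → ℝ) × (Fin m → ℝ)) Finset.univ
        (fun i => (Pi.single i (1 : ℝ), a (Pi.single i (1 : ℝ))))
      = ∑ I : Finset (Fin n),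
          σ I •
            (wedgeOver (V := (Fin n → ℝ) × (Fin m → ℝ)) I
                (fun i => (Pi.single i (1 : ℝ), 0)) *
              wedgeOver (V := (Fin n → ℝ) × (Fin m → ℝ)) Iᶜ
                (fun i => (0, a (Pi.single i (1 : ℝ))))) := by
  have hσ_eq (I : Finset (Fin n)) : σ I = ((shuffleSign I : ℤ) : ℝ) :=
    eq_shuffleSign_of_wedgeOver_mul_wedgeOver_compl (Pi.basisFun ℝ (Fin n))
      (by rw [show ⇑(Pi.basisFun ℝ (Fin n)) = fun i => Pi.single i 1 from
        funext (Pi.basisFun_apply ℝ (Fin n))]; exact hσ I)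
  have hgraph : (fun i => ((Pi.single i 1 : Fin n → ℝ), a (Pi.single i 1))) =
      (fun i => ((Pi.single i 1 : Fin n → ℝ), (0 : Fin m → ℝ))) +
        fun i => (0, a (Pi.single i 1)) := by
    ext i <;> simp
  simp only [hgraph, wedgeOver_univ_add, hσ_eq, Int.cast_smul_eq_zsmul, Units.smul_def]
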